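/- For the Kähler AR(2) geometry, ψ₂ = (1 − |ξ¹|²)(1 − |ξ²|²) is a positive superharmonic function: Δψ₂/ψ₂ = −2(2 − ξ¹ξ̄² − ξ²ξ̄¹)/|ξ¹ − ξ²|² < 0. -/

import Mathlib

/-! In dimension two the inverse metric is the adjugate over the determinant, and the Cauchy-type
matrix `g_{i¯j} = 1/(1 − ξ^i ξ̄^j)` has determinant `|ξ¹ − ξ²|² / ∏_{i,j} (1 − ξ^i ξ̄^j)`. The
polarized `ψ₂` is affine in each coordinate, so its mixed Hessian is read off directly, and the
contraction collapses to `−2(2 − ξ¹ξ̄² − ξ²ξ̄¹)/|ξ¹ − ξ²|² · ψ₂`. The factor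
`2 − ξ¹ξ̄² − ξ²ξ̄¹ = 2 − 2 Re(ξ¹ξ̄²)` is real and positive because `|ξ¹ξ̄²| < 1`. -/

/-- Holomorphic partial derivative `∂_i F` in the `i`-th complex coordinate. -/
noncomputable def pd {n : ℕ} (F : (Fin n → ℂ) → ℂ) (i : Fin n) (ξ : Fin n → ℂ) : ℂ :=
  deriv (fun t => F (Function.update ξ i t)) (ξ i)

/-- Componentwise complex conjugation of a coordinate vector. -/
def conjVec {n : ℕ} (ζ : Fin n → ℂ) : Fin n → ℂ := fun m => starRingEnd ℂ (ζ m)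

/-- The mixed Wirtinger Hessian `∂_i ∂_{¯j} ψ` of a function given in the polarized form
`ψc ξ ζ` (holomorphic in `ξ` and in `ζ`), evaluated at `ζ = conj ξ`. -/
noncomputable def mixedHess {n : ℕ} (ψc : (Fin n → ℂ) → (Fin n → ℂ) → ℂ)
    (ξ : Fin n → ℂ) (i j : Fin n) : ℂ :=
  pd (fun ξ' => pd (ψc ξ') j (conjVec ξ)) i ξ

/-- The AR metric `g_{i¯j} = 1/(1 − ξ^i conj(ξ^j))`. -/
noncomputable def arMetric {n : ℕ} (ξ : Fin n → ℂ) : Matrix (Fin n) (Fin n) ℂ :=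
  Matrix.of fun i j => 1 / (1 - ξ i * starRingEnd ℂ (ξ j))

/-- The Kähler Laplace–Beltrami operator `Δψ = 2 g^{i¯j} ∂_i ∂_{¯j} ψ`, with
`g^{i¯j} = (g⁻¹)_{ji}`. -/
noncomputable def kahlerLap {n : ℕ} (ψc : (Fin n → ℂ) → (Fin n → ℂ) → ℂ)
    (ξ : Fin n → ℂ) : ℂ :=
  2 * ∑ i, ∑ j, (arMetric ξ)⁻¹ j i * mixedHess ψc ξ i j


open ComplexConjugate

lemma norm_mul_conj_lt_one {u v : ℂ} (hu : ‖u‖ < 1) (hv : ‖v‖ < 1) : ‖u * conj v‖ < 1 := by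
  rw [norm_mul, Complex.norm_conj]
  nlinarith [norm_nonneg u, norm_nonneg v]

lemma one_sub_mul_conj_ne_zero {u v : ℂ} (hu : ‖u‖ < 1) (hv : ‖v‖ < 1) :
    1 - u * conj v ≠ 0 := fun h =>
  (norm_mul_conj_lt_one hu hv).ne (by rw [← sub_eq_zero.mp h, norm_one])

lemma two_sub_mul_conj_sub_mul_conj (u v : ℂ) :
    2 - u * conj v - v * conj u = ((2 - 2 * (u * conj v).re : ℝ) : ℂ) := by
  have h := Complex.add_conj (u * conj v)
  rw [map_mul, Complex.conj_conj, mul_comm (conj u)] at h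
  rw [sub_sub, h]
  push_cast
  ring

lemma pd_eq_of_affine {n : ℕ} {F : (Fin n → ℂ) → ℂ} {i : Fin n} {ξ : Fin n → ℂ} (p q : ℂ)
    (hF : ∀ t, F (Function.update ξ i t) = p + q * t) : pd F i ξ = q := by
  rw [pd, funext hF]
  simp

lemma kahlerLap_fin_two (ψc : (Fin 2 → ℂ) → (Fin 2 → ℂ) → ℂ) (ξ : Fin 2 → ℂ) :
    kahlerLap ψc ξ
      = 2 * (arMetric ξ 1 1 * mixedHess ψc ξ 0 0 - arMetric ξ 1 0 * mixedHess ψc ξ 0 1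
          - arMetric ξ 0 1 * mixedHess ψc ξ 1 0 + arMetric ξ 0 0 * mixedHess ψc ξ 1 1)
        / (arMetric ξ).det := by
  rw [kahlerLap, Matrix.inv_def, Ring.inverse_eq_inv', Matrix.adjugate_fin_two]
  simp only [Fin.sum_univ_two, Matrix.smul_apply, Matrix.of_apply, Matrix.cons_val',
    Matrix.cons_val_zero, Matrix.cons_val_one, Matrix.cons_val_fin_one,
    Matrix.empty_val', smul_eq_mul]
  ring

/-- The polarization of `ψ₂ = (1 − |ξ¹|²)(1 − |ξ²|²)`. -/
def psiTwo (ξ ζ : Fin 2 → ℂ) : ℂ := (1 - ξ 0 * ζ 0) * (1 - ξ 1 * ζ 1)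

lemma pd_psiTwo_zero (x ζ : Fin 2 → ℂ) : pd (psiTwo x) 0 ζ = -(x 0 * (1 - x 1 * ζ 1)) :=
  pd_eq_of_affine (1 - x 1 * ζ 1) _ fun t => by simp [psiTwo, Function.update]; ring

lemma pd_psiTwo_one (x ζ : Fin 2 → ℂ) : pd (psiTwo x) 1 ζ = -(x 1 * (1 - x 0 * ζ 0)) :=
  pd_eq_of_affine (1 - x 0 * ζ 0) _ fun t => by simp [psiTwo, Function.update]; ring

lemma mixedHess_psiTwo (ξ : Fin 2 → ℂ) (i j : Fin 2) :
    mixedHess psiTwo ξ i j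
      = !![-(1 - ξ 1 * conj (ξ 1)), ξ 1 * conj (ξ 0);
           ξ 0 * conj (ξ 1), -(1 - ξ 0 * conj (ξ 0))] i j := by
  fin_cases i <;> fin_cases j <;>
    simp only [mixedHess, pd_psiTwo_zero, pd_psiTwo_one, Fin.zero_eta, Fin.mk_one, Fin.isValue,
      Matrix.of_apply, Matrix.cons_val', Matrix.cons_val_zero, Matrix.cons_val_one,
      Matrix.cons_val_fin_one, Matrix.empty_val'] <;>
    [refine pd_eq_of_affine 0 _ fun t => ?_; refine pd_eq_of_affine (-ξ 1) _ fun t => ?_;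
     refine pd_eq_of_affine (-ξ 0) _ fun t => ?_; refine pd_eq_of_affine 0 _ fun t => ?_] <;>
    · simp [Function.update, conjVec]
      ring

lemma arMetric_det_fin_two (ξ : Fin 2 → ℂ) (h : ∀ i j, 1 - ξ i * conj (ξ j) ≠ 0) :
    (arMetric ξ).det
      = (ξ 0 - ξ 1) * (conj (ξ 0) - conj (ξ 1))
        / ((1 - ξ 0 * conj (ξ 0)) * (1 - ξ 1 * conj (ξ 1))
          * (1 - ξ 0 * conj (ξ 1)) * (1 - ξ 1 * conj (ξ 0))) := by
  simp only [Matrix.det_fin_two, arMetric, Matrix.of_apply, div_mul_div_comm]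
  rw [div_sub_div _ _ (mul_ne_zero (h 0 0) (h 1 1)) (mul_ne_zero (h 0 1) (h 1 0))]
  congr 1 <;> ring

lemma kahlerLap_psiTwo (ξ : Fin 2 → ℂ) (h0 : ‖ξ 0‖ < 1) (h1 : ‖ξ 1‖ < 1) (hne : ξ 0 ≠ ξ 1) :
    kahlerLap psiTwo ξ
      = -2 * (2 - ξ 0 * conj (ξ 1) - ξ 1 * conj (ξ 0)) / ((‖ξ 0 - ξ 1‖ ^ 2 : ℝ) : ℂ)
        * (((1 - ‖ξ 0‖ ^ 2) * (1 - ‖ξ 1‖ ^ 2) : ℝ) : ℂ) := by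
  have hg : ∀ i j, 1 - ξ i * conj (ξ j) ≠ 0 := by
    intro i j
    fin_cases i <;> fin_cases j <;> exact one_sub_mul_conj_ne_zero ‹_› ‹_›
  have h00 := hg 0 0; have h01 := hg 0 1; have h10 := hg 1 0; have h11 := hg 1 1
  have hsub : ξ 0 - ξ 1 ≠ 0 := sub_ne_zero.mpr hne
  have hcsub : conj (ξ 0) - conj (ξ 1) ≠ 0 := by rwa [← map_sub, map_ne_zero]
  push_cast
  simp only [← Complex.mul_conj', map_sub]
  rw [kahlerLap_fin_two, arMetric_det_fin_two ξ hg]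
  simp only [mixedHess_psiTwo, arMetric, Matrix.of_apply, Matrix.cons_val', Matrix.cons_val_zero,
    Matrix.cons_val_one, Matrix.cons_val_fin_one, Matrix.empty_val']
  -- `field_simp` only cancels a denominator whose nonvanishing hypothesis has the same factor order
  ring_nf at h00 h01 h10 h11 hcsub ⊢
  field_simp
  ring

/-- For the Kähler AR(2) geometry, `ψ₂ = (1−|ξ¹|²)(1−|ξ²|²)` is a positive superharmonic
function: `Δψ₂/ψ₂ = −2(2 − ξ¹ξ̄² − ξ²ξ̄¹)/|ξ¹ − ξ²|² < 0`. -/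
theorem stmt17 (ξ : Fin 2 → ℂ) (h0 : ‖ξ 0‖ < 1) (h1 : ‖ξ 1‖ < 1) (hne : ξ 0 ≠ ξ 1) :
    kahlerLap (fun ξ' ζ => (1 - ξ' 0 * ζ 0) * (1 - ξ' 1 * ζ 1)) ξ
        = (-2 * (2 - ξ 0 * starRingEnd ℂ (ξ 1) - ξ 1 * starRingEnd ℂ (ξ 0))
            / ((‖ξ 0 - ξ 1‖ ^ 2 : ℝ) : ℂ))
          * (((1 - ‖ξ 0‖ ^ 2) * (1 - ‖ξ 1‖ ^ 2) : ℝ) : ℂ)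
      ∧ 0 < (1 - ‖ξ 0‖ ^ 2) * (1 - ‖ξ 1‖ ^ 2)
      ∧ (kahlerLap (fun ξ' ζ => (1 - ξ' 0 * ζ 0) * (1 - ξ' 1 * ζ 1)) ξ).re < 0
      ∧ (kahlerLap (fun ξ' ζ => (1 - ξ' 0 * ζ 0) * (1 - ξ' 1 * ζ 1)) ξ).im = 0 := by
  have hL := kahlerLap_psiTwo ξ h0 h1 hne
  have hψ : 0 < (1 - ‖ξ 0‖ ^ 2) * (1 - ‖ξ 1‖ ^ 2) :=
    mul_pos (sub_pos.mpr (pow_lt_one₀ (norm_nonneg _) h0 two_ne_zero))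
      (sub_pos.mpr (pow_lt_one₀ (norm_nonneg _) h1 two_ne_zero))
  have hdist : 0 < ‖ξ 0 - ξ 1‖ ^ 2 := pow_pos (norm_pos_iff.mpr (sub_ne_zero.mpr hne)) 2
  have hre : (ξ 0 * conj (ξ 1)).re < 1 :=
    (Complex.re_le_norm _).trans_lt (norm_mul_conj_lt_one h0 h1)
  have hreal : kahlerLap psiTwo ξ = ((-2 * (2 - 2 * (ξ 0 * conj (ξ 1)).re) / ‖ξ 0 - ξ 1‖ ^ 2
      * ((1 - ‖ξ 0‖ ^ 2) * (1 - ‖ξ 1‖ ^ 2)) : ℝ) : ℂ) := by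
    rw [hL, two_sub_mul_conj_sub_mul_conj]
    push_cast
    rfl
  refine ⟨hL, hψ, ?_, (by rw [hreal, Complex.ofReal_im] : (kahlerLap psiTwo ξ).im = 0)⟩
  show (kahlerLap psiTwo ξ).re < 0
  rw [hreal, Complex.ofReal_re]
  exact mul_neg_of_neg_of_pos (div_neg_of_neg_of_pos (by linarith) hdist) hψ
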